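/- arXiv:1205.6433 — 2 statements merged into one kernel-verified Lean document; each statement's English description precedes it below -/
import Mathlib

section
/- Let p be a prime and set n = p^2 − 1. If f : ZMod p × ZMod p → ZMod n has the periodic Costas property and x₁, x₂ ∈ ZMod p satisfy x₁ * x₂ ≠ 1 (so that the shear map is a permutation of ZMod p × ZMod p), then the row-and-column shear G2, namely the function g defined by g (i, j) = f (i + x₂ * j, j + x₁ * i), also has the periodic Costas property. -/
/-!
The shear `(i, j) ↦ (i + x₂ j, j + x₁ i)` is an additive map of `ℤ_p × ℤ_p` with determinant
`1 - x₁ x₂`, hence injective when `x₁ x₂ ≠ 1`. Precomposing a periodic Costas array with an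
injective additive map preserves the property: such a map fixes `0`, sends nonzero points to
nonzero points and commutes with the translations `a ↦ a + h`, so a repeated difference of
`f ∘ T` is a repeated difference of `f`.
-/

/-- The periodic Costas (distinct difference) property for a three-dimensional
array `f : ℤ_p × ℤ_p → ℤ_{p^2 - 1}`. -/
def PeriodicCostas2 (p n : ℕ) (f : ZMod p × ZMod p → ZMod n) : Prop :=
  ∀ h : ZMod p × ZMod p, h ≠ 0 → ∀ a b : ZMod p × ZMod p,
    a ≠ 0 → b ≠ 0 → a + h ≠ 0 → b + h ≠ 0 →
    f (a + h) - f a = f (b + h) - f b → a = b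

theorem PeriodicCostas2.comp_injective {p n : ℕ} {f : ZMod p × ZMod p → ZMod n}
    (hf : PeriodicCostas2 p n f) (T : ZMod p × ZMod p →+ ZMod p × ZMod p)
    (hT : Function.Injective T) : PeriodicCostas2 p n (f ∘ T) := by
  intro h hh a b ha hb hah hbh heq
  have hT0 {v : ZMod p × ZMod p} (hv : v ≠ 0) : T v ≠ 0 := (map_ne_zero_iff T hT).2 hv
  simp only [Function.comp_apply, map_add] at heq
  exact hT <| hf (T h) (hT0 hh) (T a) (T b) (hT0 ha) (hT0 hb)
    (map_add T a h ▸ hT0 hah) (map_add T b h ▸ hT0 hbh) heq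

/-- The row-and-column shear `G2`. -/
def shear {R : Type*} [CommRing R] (x₁ x₂ : R) : R × R →+ R × R :=
  AddMonoidHom.mk' (fun ij => (ij.1 + x₂ * ij.2, ij.2 + x₁ * ij.1)) fun u v => by
    ext <;> simp only [Prod.fst_add, Prod.snd_add] <;> ring

theorem shear_injective {R : Type*} [CommRing R] [NoZeroDivisors R] {x₁ x₂ : R}
    (hx : x₁ * x₂ ≠ 1) : Function.Injective (shear x₁ x₂) := by
  refine (injective_iff_map_eq_zero _).2 fun v hv => ?_
  have h₁ : v.1 + x₂ * v.2 = 0 := congrArg Prod.fst hv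
  have h₂ : v.2 + x₁ * v.1 = 0 := congrArg Prod.snd hv
  have hdet : (1 - x₁ * x₂) * v.1 = 0 := by linear_combination h₁ - x₂ * h₂
  have hv₁ : v.1 = 0 := (mul_eq_zero.1 hdet).resolve_left (sub_ne_zero.2 (Ne.symm hx))
  have hv₂ : v.2 = 0 := by linear_combination h₂ - x₁ * hv₁
  exact Prod.ext hv₁ hv₂

/-- The row-and-column shear `G2` applied to a three-dimensional periodic
Costas array over `ℤ_p × ℤ_p` generates a new three-dimensional periodic
Costas array. -/
theorem G2_periodicCostas
    (p : ℕ) (hp : p.Prime)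
    (f : ZMod p × ZMod p → ZMod (p ^ 2 - 1))
    (hf : PeriodicCostas2 p (p ^ 2 - 1) f)
    (x₁ x₂ : ZMod p) (hx : x₁ * x₂ ≠ 1) :
    PeriodicCostas2 p (p ^ 2 - 1)
      (fun ij => f (ij.1 + x₂ * ij.2, ij.2 + x₁ * ij.1)) := by
  have : Fact p.Prime := ⟨hp⟩
  exact hf.comp_injective (shear x₁ x₂) (shear_injective hx)
end

section
/- Let p be a prime, m ≥ 1, set n = p^m − 1, and let M be an m × m matrix over ZMod p with M i i = 1 for every index i and with invertible determinant (IsUnit M.det). If f : (Fin m → ZMod p) → ZMod n has the periodic Costas property, then the shear permutation G2, namely the function g defined by g a = f (M.mulVec a), also has the periodic Costas property. -/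
/-! Only two features of the shear `a ↦ M a` matter: it is additive, so differences
`f (a + h) - f a` are carried to differences, and it is injective, so nonzero points stay
nonzero and distinct points stay distinct. Any invertible matrix qualifies. -/

/-- The periodic Costas (distinct difference) property for a multidimensional
array `f : (ℤ_p)^m → ℤ_{p^m - 1}`. -/
def PeriodicCostas (p m n : ℕ) (f : (Fin m → ZMod p) → ZMod n) : Prop :=
  ∀ h : Fin m → ZMod p, h ≠ 0 → ∀ a b : Fin m → ZMod p,
    a ≠ 0 → b ≠ 0 → a + h ≠ 0 → b + h ≠ 0 →
    f (a + h) - f a = f (b + h) - f b → a = b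

theorem PeriodicCostas.comp_addMonoidHom {p m n : ℕ} {f : (Fin m → ZMod p) → ZMod n}
    (hf : PeriodicCostas p m n f) (φ : (Fin m → ZMod p) →+ (Fin m → ZMod p))
    (hφ : Function.Injective φ) : PeriodicCostas p m n (f ∘ φ) := by
  have hφ0 : ∀ {x}, x ≠ 0 → φ x ≠ 0 := fun hx => (map_ne_zero_iff φ hφ).2 hx
  intro h hh a b ha hb hah hbh hdiff
  refine hφ (hf (φ h) (hφ0 hh) (φ a) (φ b) (hφ0 ha) (hφ0 hb) ?_ ?_ ?_)
  · simpa only [map_add] using hφ0 hah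
  · simpa only [map_add] using hφ0 hbh
  · simpa only [Function.comp_apply, map_add] using hdiff

theorem G2_general_periodicCostas_general
    (p m : ℕ)
    (M : Matrix (Fin m) (Fin m) (ZMod p))
    (hdet : IsUnit M.det)
    (f : (Fin m → ZMod p) → ZMod (p ^ m - 1))
    (hf : PeriodicCostas p m (p ^ m - 1) f) :
    PeriodicCostas p m (p ^ m - 1) (fun a => f (M.mulVec a)) :=
  hf.comp_addMonoidHom M.mulVecLin.toAddMonoidHom
    (Matrix.mulVec_injective_of_isUnit ((Matrix.isUnit_iff_isUnit_det M).2 hdet))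

/-- The shear permutation `G2`, given by an invertible matrix `M` over `ℤ_p`
with all diagonal entries equal to `1`, applied to an `(m+1)`-dimensional
periodic Costas array over `(ℤ_p)^m` generates a new `(m+1)`-dimensional
periodic Costas array. -/
theorem G2_general_periodicCostas
    (p m : ℕ) (hp : p.Prime) (hm : 1 ≤ m)
    (M : Matrix (Fin m) (Fin m) (ZMod p))
    (hdiag : ∀ i, M i i = 1) (hdet : IsUnit M.det)
    (f : (Fin m → ZMod p) → ZMod (p ^ m - 1))
    (hf : PeriodicCostas p m (p ^ m - 1) f) :
    PeriodicCostas p m (p ^ m - 1) (fun a => f (M.mulVec a)) :=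
  G2_general_periodicCostas_general p m M hdet f hf
end
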